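/- Suppose m > d, r > (m-d)/a, a > 1, d_ij > 0 with d11 d22 - d12 d21 > 0, and d12 < (ad/(m-d)) d11 + (ad²/(m-d)²) d21 + (-(m+d)/(m-d) + amr/(m-d)²) d22. Then for every λ ≥ 0 the matrix A_r - λD has negative trace and positive determinant, where A_r = [[(m²-d²)/(ma) - r, -d²/m],[(d-m)²/(am), -d(m-d)/m]] and D = [[d11,-d12],[-d21,d22]]. -/

import Mathlib

/-!
For `λ ≥ 0` we have `tr (A - λD) = tr A - λ tr D` and
`det (A - λD) = det A - λ S + λ² det D`, where `S = a₁₁d₂₂ + a₂₂d₁₁ + a₁₂d₂₁ + a₂₁d₁₂`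
is the mixed term of the determinant. So it suffices that `tr A < 0`, `det A > 0`, `tr D > 0`,
`det D > 0` and `S < 0`. For `A_r` the first two follow from `r a > m - d` and `a > 1`, and
after clearing the denominator `(m - d)²` the bound on `d₁₂` is exactly `S < 0`.
-/

open Matrix

theorem Matrix.det_sub_smul_fin_two {R : Type*} [CommRing R] (A D : Matrix (Fin 2) (Fin 2) R)
    (t : R) :
    (A - t • D).det = A.det
      - t * (A 0 0 * D 1 1 + A 1 1 * D 0 0 - A 0 1 * D 1 0 - A 1 0 * D 0 1) + t ^ 2 * D.det := by
  simp only [det_fin_two, sub_apply, smul_apply, smul_eq_mul]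
  ring

theorem Matrix.trace_neg_and_det_pos_sub_smul_fin_two (A D : Matrix (Fin 2) (Fin 2) ℝ)
    (htrA : A.trace < 0) (hdetA : 0 < A.det) (htrD : 0 ≤ D.trace) (hdetD : 0 ≤ D.det)
    (hmixed : A 0 0 * D 1 1 + A 1 1 * D 0 0 - A 0 1 * D 1 0 - A 1 0 * D 0 1 < 0)
    (t : ℝ) (ht : 0 ≤ t) :
    (A - t • D).trace < 0 ∧ 0 < (A - t • D).det := by
  constructor
  · rw [trace_sub, trace_smul, smul_eq_mul]
    nlinarith [mul_nonneg ht htrD]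
  · rw [det_sub_smul_fin_two]
    nlinarith [mul_nonneg ht (neg_nonneg.mpr hmixed.le), mul_nonneg (sq_nonneg t) hdetD]

/-- The matrix `A_r`. -/
noncomputable def ratioJacobian (r m d a : ℝ) : Matrix (Fin 2) (Fin 2) ℝ :=
  !![(m^2-d^2)/(m*a) - r, -d^2/m;
     (d-m)^2/(a*m), -d*(m-d)/m]

section ratioJacobian

variable {r m d a : ℝ}

theorem trace_ratioJacobian_neg (hd : 0 < d) (hmd : d < m) (hrc : (m - d) / a < r) (ha1 : 1 < a) :
    (ratioJacobian r m d a).trace < 0 := by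
  have ha : 0 < a := by linarith
  have hm : 0 < m := hd.trans hmd
  have hra : m - d < r * a := (div_lt_iff₀ ha).mp hrc
  -- `r a > m - d` bounds the numerator by `d (m - d) (1 - a) < 0`
  have hnum : (m^2-d^2) - r*(m*a) - d*(m-d)*a < 0 := by
    nlinarith [mul_lt_mul_of_pos_left hra hm,
      mul_pos (mul_pos (sub_pos.mpr ha1) hd) (sub_pos.mpr hmd)]
  rw [ratioJacobian, trace_fin_two_of]
  rw [show (m^2-d^2)/(m*a) - r + -d*(m-d)/m = ((m^2-d^2) - r*(m*a) - d*(m-d)*a)/(m*a) by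
    field_simp; ring]
  exact div_neg_of_neg_of_pos hnum (by positivity)

theorem det_ratioJacobian_pos (hd : 0 < d) (hmd : d < m) (hrc : (m - d) / a < r) (ha : 0 < a) :
    0 < (ratioJacobian r m d a).det := by
  have hm : 0 < m := hd.trans hmd
  have hra : m - d < r * a := (div_lt_iff₀ ha).mp hrc
  rw [ratioJacobian, det_fin_two_of]
  rw [show ((m^2-d^2)/(m*a) - r)*(-d*(m-d)/m) - (-d^2/m)*((d-m)^2/(a*m))
      = (d*(m-d)*(r*a - (m-d)))/(m*a) by field_simp; ring]
  exact div_pos (mul_pos (mul_pos hd (sub_pos.mpr hmd)) (sub_pos.mpr hra)) (by positivity)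

theorem ratioJacobian_mixed_neg {d11 d12 d21 d22 : ℝ} (hd : 0 < d) (hmd : d < m) (ha : 0 < a)
    (hcrit : d12 < (a*d/(m-d))*d11 + (a*d^2/(m-d)^2)*d21
        + (-(m+d)/(m-d) + a*m*r/(m-d)^2)*d22) :
    ratioJacobian r m d a 0 0 * d22 + ratioJacobian r m d a 1 1 * d11
      - ratioJacobian r m d a 0 1 * -d21 - ratioJacobian r m d a 1 0 * -d12 < 0 := by
  have hm : 0 < m := hd.trans hmd
  have hmd' : 0 < m - d := sub_pos.mpr hmd
  have hcleared : d12*(m-d)^2 < a*d*(m-d)*d11 + a*d^2*d21 + (-(m+d)*(m-d) + a*m*r)*d22 := by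
    have h := mul_lt_mul_of_pos_right hcrit (pow_pos hmd' 2)
    rwa [show ((a*d/(m-d))*d11 + (a*d^2/(m-d)^2)*d21 + (-(m+d)/(m-d) + a*m*r/(m-d)^2)*d22)
        * (m-d)^2 = a*d*(m-d)*d11 + a*d^2*d21 + (-(m+d)*(m-d) + a*m*r)*d22 by field_simp] at h
  simp only [ratioJacobian, of_apply, cons_val', cons_val_zero, cons_val_one, empty_val',
    cons_val_fin_one]
  rw [show ((m^2-d^2)/(m*a) - r)*d22 + (-d*(m-d)/m)*d11 - (-d^2/m)*(-d21) - ((d-m)^2/(a*m))*(-d12)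
      = (((m^2-d^2) - r*(m*a))*d22 - d*(m-d)*a*d11 - d^2*a*d21 + (d-m)^2*d12)/(m*a) by
    field_simp; ring]
  exact div_neg_of_neg_of_pos (by nlinarith) (by positivity)

end ratioJacobian

theorem ratio_dependent_diffusion_stable_general
    (r m d a d11 d12 d21 d22 : ℝ)
    (hd : 0 < d) (ha : 0 < a)
    (hmd : m > d) (hrc : r > (m-d)/a) (ha1 : a > 1)
    (hd11 : 0 < d11) (hd22 : 0 < d22)
    (hdetD : 0 < d11*d22 - d12*d21)
    (hcrit : d12 < (a*d/(m-d))*d11 + (a*d^2/(m-d)^2)*d21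
        + (-(m+d)/(m-d) + a*m*r/(m-d)^2)*d22) :
    ∀ lam : ℝ, 0 ≤ lam →
      Matrix.trace ((!![(m^2-d^2)/(m*a) - r, -d^2/m;
                        (d-m)^2/(a*m), -d*(m-d)/m] : Matrix (Fin 2) (Fin 2) ℝ)
          - lam • (!![d11, -d12; -d21, d22] : Matrix (Fin 2) (Fin 2) ℝ)) < 0 ∧
      0 < Matrix.det ((!![(m^2-d^2)/(m*a) - r, -d^2/m;
                          (d-m)^2/(a*m), -d*(m-d)/m] : Matrix (Fin 2) (Fin 2) ℝ)
          - lam • (!![d11, -d12; -d21, d22] : Matrix (Fin 2) (Fin 2) ℝ)) :=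
  Matrix.trace_neg_and_det_pos_sub_smul_fin_two (ratioJacobian r m d a) !![d11, -d12; -d21, d22]
    (trace_ratioJacobian_neg hd hmd hrc ha1) (det_ratioJacobian_pos hd hmd hrc ha)
    (by rw [trace_fin_two_of]; positivity) (by rw [det_fin_two_of]; linarith)
    (ratioJacobian_mixed_neg hd hmd ha hcrit)

theorem ratio_dependent_diffusion_stable
    (r m d a d11 d12 d21 d22 : ℝ)
    (hr : 0 < r) (hm : 0 < m) (hd : 0 < d) (ha : 0 < a)
    (hmd : m > d) (hrc : r > (m-d)/a) (ha1 : a > 1)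
    (hd11 : 0 < d11) (hd12 : 0 < d12) (hd21 : 0 < d21) (hd22 : 0 < d22)
    (hdetD : 0 < d11*d22 - d12*d21)
    (hcrit : d12 < (a*d/(m-d))*d11 + (a*d^2/(m-d)^2)*d21
        + (-(m+d)/(m-d) + a*m*r/(m-d)^2)*d22) :
    ∀ lam : ℝ, 0 ≤ lam →
      Matrix.trace ((!![(m^2-d^2)/(m*a) - r, -d^2/m;
                        (d-m)^2/(a*m), -d*(m-d)/m] : Matrix (Fin 2) (Fin 2) ℝ)
          - lam • (!![d11, -d12; -d21, d22] : Matrix (Fin 2) (Fin 2) ℝ)) < 0 ∧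
      0 < Matrix.det ((!![(m^2-d^2)/(m*a) - r, -d^2/m;
                          (d-m)^2/(a*m), -d*(m-d)/m] : Matrix (Fin 2) (Fin 2) ℝ)
          - lam • (!![d11, -d12; -d21, d22] : Matrix (Fin 2) (Fin 2) ℝ)) :=
  ratio_dependent_diffusion_stable_general r m d a d11 d12 d21 d22 hd ha hmd hrc ha1 hd11 hd22 hdetD
    hcrit
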